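/- arXiv:0802.1237 — 5 statements merged into one kernel-verified Lean document; each statement's English description precedes it below -/
import Mathlib

section
/- If a = (a_1,...,a_n) and b = (b_1,...,b_n) are non-increasing sequences of non-negative integers with equal sum m > 0, and a dominates b (i.e., every partial sum of a is at least the corresponding partial sum of b, with strict inequality for at least one index), then H(a/m) < H(b/m), where H(p) = Σ -p_i log₂ p_i (with 0 log 0 := 0). -/
open Finset

namespace Stmt0Aux

/-- partial sum -/
def pS (n : ℕ) (a : Fin n → ℕ) (i : Fin n) : ℕ := ∑ j ∈ Finset.Iic i, a j

/-- the convex function `x ↦ x log x` on naturals -/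
noncomputable def Fr (x : ℕ) : ℝ := (x : ℝ) * Real.log x

lemma Iio_eq_empty {n : ℕ} (i : Fin n) (h : i.val = 0) : Finset.Iio i = ∅ := by
  ext k; simp [Fin.lt_def, h]

lemma Iio_eq_Iic {n : ℕ} (i : Fin n) (h : 0 < i.val) :
    Finset.Iio i = Finset.Iic (⟨i.val - 1, by omega⟩ : Fin n) := by
  ext k
  simp only [Finset.mem_Iio, Finset.mem_Iic, Fin.lt_def, Fin.le_def]
  omega

lemma pS_split {n : ℕ} (a : Fin n → ℕ) (i : Fin n) :
    pS n a i = (∑ j ∈ Finset.Iio i, a j) + a i := by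
  rw [pS, ← Finset.Iio_insert, Finset.sum_insert (by simp)]; ring

lemma pS_eq_imp {n : ℕ} (a b : Fin n → ℕ) (h : ∀ i, pS n a i = pS n b i) : a = b := by
  funext i
  have h1 : ∑ j ∈ Finset.Iio i, a j = ∑ j ∈ Finset.Iio i, b j := by
    rcases Nat.eq_zero_or_pos i.val with h0 | h0
    · rw [Iio_eq_empty i h0]; simp
    · rw [Iio_eq_Iic i h0]; exact h _
  have h2 := pS_split a i
  have h3 := pS_split b i
  have := h i
  omega

/-- key strict convexity step -/
lemma F_step {x y : ℕ} (h : x + 2 ≤ y) : Fr (y - 1) + Fr (x + 1) < Fr y + Fr x := by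
  have hy1 : (1:ℕ) ≤ y := by omega
  have hcast : ((y - 1 : ℕ) : ℝ) = (y : ℝ) - 1 := by
    push_cast [Nat.cast_sub hy1]; ring
  have hcast2 : ((x + 1 : ℕ) : ℝ) = (x : ℝ) + 1 := by push_cast; ring
  rw [Fr, Fr, Fr, Fr, hcast, hcast2]
  set X := (x : ℝ) with hX
  set Y := (y : ℝ) with hY
  have hXY : X + 2 ≤ Y := by rw [hX, hY]; exact_mod_cast h
  have hX0 : (0:ℝ) ≤ X := by positivity
  have hY0 : (0:ℝ) ≤ Y := by positivity
  have hne : X ≠ Y := by intro hh; rw [hh] at hXY; linarith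
  set θ : ℝ := 1 / (Y - X) with hθ
  have hYX : (0:ℝ) < Y - X := by linarith
  have hθpos : 0 < θ := by positivity
  have hθlt : θ < 1 := by
    rw [hθ, div_lt_one hYX]; linarith
  have h1θ : 0 < 1 - θ := by linarith
  have hsum : (1 - θ) + θ = 1 := by ring
  have hsum2 : θ + (1 - θ) = 1 := by ring
  have key := Real.strictConvexOn_mul_log.2 (Set.mem_Ici.mpr hX0) (Set.mem_Ici.mpr hY0)
    hne h1θ hθpos hsum
  have key2 := Real.strictConvexOn_mul_log.2 (Set.mem_Ici.mpr hX0) (Set.mem_Ici.mpr hY0)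
    hne hθpos h1θ hsum2
  have e1 : (1 - θ) • X + θ • Y = X + 1 := by
    rw [smul_eq_mul, smul_eq_mul, hθ]; field_simp; ring
  have e2 : θ • X + (1 - θ) • Y = Y - 1 := by
    rw [smul_eq_mul, smul_eq_mul, hθ]; field_simp; ring
  rw [e1] at key
  rw [e2] at key2
  have k1 : (X + 1) * Real.log (X + 1) < (1 - θ) * (X * Real.log X) + θ * (Y * Real.log Y) := by
    have := key; simpa [smul_eq_mul] using this
  have k2 : (Y - 1) * Real.log (Y - 1) < θ * (X * Real.log X) + (1 - θ) * (Y * Real.log Y) := by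
    have := key2; simpa [smul_eq_mul] using this
  linarith

/-- One Robin Hood transfer. -/
lemma step {n : ℕ} (a b : Fin n → ℕ) (ha : Antitone a) (hb : Antitone b)
    (hs : ∑ i, a i = ∑ i, b i)
    (hdom : ∀ i, pS n b i ≤ pS n a i) (hne : a ≠ b) :
    ∃ a' : Fin n → ℕ, Antitone a' ∧ (∑ i, a' i = ∑ i, b i) ∧
      (∀ i, pS n b i ≤ pS n a' i) ∧
      (∑ i, (pS n a' i - pS n b i) < ∑ i, (pS n a i - pS n b i)) ∧
      (∑ i, Fr (a' i) < ∑ i, Fr (a i)) := by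
  classical
  -- first index where they differ
  have hD : (Finset.univ.filter (fun k => a k ≠ b k)).Nonempty := by
    by_contra h
    apply hne
    funext k
    by_contra hk
    exact h ⟨k, Finset.mem_filter.mpr ⟨Finset.mem_univ k, hk⟩⟩
  set i₀ := (Finset.univ.filter (fun k => a k ≠ b k)).min' hD with hi₀def
  have hi₀mem := Finset.min'_mem (Finset.univ.filter (fun k => a k ≠ b k)) hD
  have hi₀ne : a i₀ ≠ b i₀ := (Finset.mem_filter.mp hi₀mem).2
  have hi₀min : ∀ k, a k ≠ b k → i₀ ≤ k := fun k hk =>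
    Finset.min'_le _ _ (Finset.mem_filter.mpr ⟨Finset.mem_univ k, hk⟩)
  have hi₀lt : ∀ k, k < i₀ → a k = b k := by
    intro k hk; by_contra hc; exact absurd (hi₀min k hc) (not_le.mpr hk)
  have hbi₀ : b i₀ < a i₀ := by
    have h1 : ∑ j ∈ Finset.Iio i₀, a j = ∑ j ∈ Finset.Iio i₀, b j :=
      Finset.sum_congr rfl (fun k hk => hi₀lt k (Finset.mem_Iio.mp hk))
    have h2 := pS_split a i₀
    have h3 := pS_split b i₀
    have h4 := hdom i₀
    omega
  -- first index where a < b
  have hE : (Finset.univ.filter (fun k => a k < b k)).Nonempty := by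
    by_contra h
    have hle : ∀ k, b k ≤ a k := by
      intro k
      by_contra hc
      exact h ⟨k, Finset.mem_filter.mpr ⟨Finset.mem_univ k, by omega⟩⟩
    have := Finset.sum_lt_sum (fun k _ => hle k) ⟨i₀, Finset.mem_univ i₀, hbi₀⟩
    omega
  set j := (Finset.univ.filter (fun k => a k < b k)).min' hE with hjdef
  have hjmem := Finset.min'_mem (Finset.univ.filter (fun k => a k < b k)) hE
  have haj : a j < b j := (Finset.mem_filter.mp hjmem).2
  have hjmin : ∀ k, k < j → b k ≤ a k := by
    intro k hk
    by_contra hc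
    exact absurd (Finset.min'_le _ k (Finset.mem_filter.mpr ⟨Finset.mem_univ k, by omega⟩))
      (not_le.mpr hk)
  have hi₀j : i₀ < j := by
    rcases lt_or_ge i₀ j with h | h
    · exact h
    · rcases eq_or_lt_of_le h with h | h
      · exfalso; rw [h] at haj; omega
      · exfalso; have := hi₀min j (by omega); exact absurd this (not_le.mpr h)
  -- last index before j where b < a
  have hF : (Finset.univ.filter (fun k => k < j ∧ b k < a k)).Nonempty :=
    ⟨i₀, Finset.mem_filter.mpr ⟨Finset.mem_univ i₀, hi₀j, hbi₀⟩⟩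
  set i := (Finset.univ.filter (fun k => k < j ∧ b k < a k)).max' hF with hidef
  have himem := Finset.max'_mem (Finset.univ.filter (fun k => k < j ∧ b k < a k)) hF
  have hij : i < j := (Finset.mem_filter.mp himem).2.1
  have hbia : b i < a i := (Finset.mem_filter.mp himem).2.2
  have himax : ∀ k, k < j → b k < a k → k ≤ i := fun k hk1 hk2 =>
    Finset.le_max' _ k (Finset.mem_filter.mpr ⟨Finset.mem_univ k, hk1, hk2⟩)
  have hmid : ∀ k, i < k → k < j → a k = b k := by
    intro k hk1 hk2
    have h1 := hjmin k hk2
    by_contra hc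
    have : b k < a k := by omega
    exact absurd (himax k hk2 this) (not_le.mpr hk1)
  have h2 : a j + 2 ≤ a i := by
    have hbb : b j ≤ b i := hb hij.le
    omega
  have hijne : i ≠ j := hij.ne
  have hjine : j ≠ i := hij.ne'
  -- define transfer
  set a' : Fin n → ℕ :=
    Function.update (Function.update a i (a i - 1)) j (a j + 1) with ha'def
  have ha'i : a' i = a i - 1 := by
    rw [ha'def, Function.update_of_ne hijne, Function.update_self]
  have ha'j : a' j = a j + 1 := by
    rw [ha'def, Function.update_self]
  have ha'k : ∀ k, k ≠ i → k ≠ j → a' k = a k := by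
    intro k hk1 hk2
    rw [ha'def, Function.update_of_ne hk2, Function.update_of_ne hk1]
  -- antitone
  have ha' : Antitone a' := by
    intro k l hkl
    rcases eq_or_lt_of_le hkl with h | hkl'
    · rw [h]
    by_cases hli : l = i
    · subst hli
      have hk1 : k ≠ i := hkl'.ne
      have hk2 : k ≠ j := fun h => by rw [h] at hkl'; exact absurd (hkl'.trans hij) (lt_irrefl j)
      rw [ha'i, ha'k k hk1 hk2]
      have := ha hkl'.le
      omega
    by_cases hlj : l = j
    · subst hlj
      rw [ha'j]
      by_cases hki : k = i
      · subst hki; rw [ha'i]; omega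
      · have hk2 : k ≠ j := hkl'.ne
        rw [ha'k k hki hk2]
        rcases lt_or_ge k i with hk3 | hk3
        · have := ha hk3.le; omega
        · have hk4 : i < k := by
            rcases eq_or_lt_of_le hk3 with h | h
            · exact absurd h.symm hki
            · exact h
          have := hmid k hk4 hkl'
          have hbb : b j ≤ b k := hb hkl'.le
          omega
    · rw [ha'k l hli hlj]
      by_cases hki : k = i
      · subst hki
        rw [ha'i]
        rcases lt_or_ge l j with h | h
        · have := hmid l hkl' h
          have hbb : b l ≤ b i := hb hkl'.le
          omega
        · have h6 : a l ≤ a j := by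
            rcases eq_or_lt_of_le h with h | h
            · rw [← h]
            · exact ha h.le
          omega
      by_cases hkj : k = j
      · subst hkj
        rw [ha'j]
        have := ha hkl'.le
        omega
      · rw [ha'k k hki hkj]
        exact ha hkl'.le
  have hai2 : 2 ≤ a i := by omega
  -- sums over sets
  have hsum_ij : ∀ s : Finset (Fin n), i ∈ s → j ∈ s → ∑ k ∈ s, a' k = ∑ k ∈ s, a k := by
    intro s hi hj
    rw [ha'def, Finset.sum_update_of_mem hj]
    have hi' : i ∈ s \ {j} := Finset.mem_sdiff.mpr ⟨hi, by simp [hijne]⟩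
    rw [Finset.sum_update_of_mem hi']
    rw [Finset.sum_eq_add_sum_sdiff_singleton_of_mem hj a]
    rw [Finset.sum_eq_add_sum_sdiff_singleton_of_mem hi' a]
    omega
  have hsum_i : ∀ s : Finset (Fin n), i ∈ s → j ∉ s → (∑ k ∈ s, a' k) + 1 = ∑ k ∈ s, a k := by
    intro s hi hj
    have h1 : ∑ k ∈ s, a' k = ∑ k ∈ s, Function.update a i (a i - 1) k := by
      apply Finset.sum_congr rfl
      intro k hk
      have hkj : k ≠ j := by rintro rfl; exact hj hk
      rw [ha'def, Function.update_of_ne hkj]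
    rw [h1, Finset.sum_update_of_mem hi, Finset.sum_eq_add_sum_sdiff_singleton_of_mem hi a]
    omega
  have hsum_none : ∀ s : Finset (Fin n), i ∉ s → j ∉ s → ∑ k ∈ s, a' k = ∑ k ∈ s, a k := by
    intro s hi hj
    apply Finset.sum_congr rfl
    intro k hk
    have hki : k ≠ i := by rintro rfl; exact hi hk
    have hkj : k ≠ j := by rintro rfl; exact hj hk
    exact ha'k k hki hkj
  have hstot : ∑ k, a' k = ∑ k, a k :=
    hsum_ij Finset.univ (Finset.mem_univ i) (Finset.mem_univ j)
  -- partial sums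
  have hmemIic : ∀ k l : Fin n, l ∈ Finset.Iic k ↔ l ≤ k := fun k l => Finset.mem_Iic
  have hS_lt : ∀ k, k < i → pS n a' k = pS n a k := by
    intro k hk
    apply hsum_none
    · simp only [Finset.mem_Iic]; exact not_le.mpr hk
    · simp only [Finset.mem_Iic]; exact not_le.mpr (hij.trans' hk)
  have hS_mid : ∀ k, i ≤ k → k < j → pS n a' k + 1 = pS n a k := by
    intro k hk1 hk2
    apply hsum_i
    · simp only [Finset.mem_Iic]; exact hk1
    · simp only [Finset.mem_Iic]; exact not_le.mpr hk2
  have hS_ge : ∀ k, j ≤ k → pS n a' k = pS n a k := by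
    intro k hk
    apply hsum_ij
    · simp only [Finset.mem_Iic]; exact (hij.le.trans hk)
    · simp only [Finset.mem_Iic]; exact hk
  -- strict dominance inside [i, j)
  have hkey_i : pS n b i < pS n a i := by
    rcases Nat.eq_zero_or_pos i.val with h0 | h0
    · rw [pS_split a i, pS_split b i, Iio_eq_empty i h0]
      simpa using hbia
    · rw [pS_split a i, pS_split b i, Iio_eq_Iic i h0]
      have := hdom (⟨i.val - 1, by omega⟩ : Fin n)
      simp only [pS] at this ⊢
      omega
  have hkey : ∀ k, i ≤ k → k < j → pS n b k < pS n a k := by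
    intro k hk1 hk2
    have hdisj : Disjoint (Finset.Iic i) (Finset.Ioc i k) := by
      rw [Finset.disjoint_left]
      intro x h1 h2
      exact absurd (Finset.mem_Iic.mp h1) (not_le.mpr (Finset.mem_Ioc.mp h2).1)
    have hun : Finset.Iic i ∪ Finset.Ioc i k = Finset.Iic k := by
      ext x
      simp only [Finset.mem_union, Finset.mem_Iic, Finset.mem_Ioc]
      constructor
      · rintro (h | h)
        · exact h.trans hk1
        · exact h.2
      · intro h
        rcases le_or_gt x i with h' | h'
        · exact Or.inl h'
        · exact Or.inr ⟨h', h⟩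
    have heq : ∑ l ∈ Finset.Ioc i k, a l = ∑ l ∈ Finset.Ioc i k, b l := by
      apply Finset.sum_congr rfl
      intro l hl
      obtain ⟨hl1, hl2⟩ := Finset.mem_Ioc.mp hl
      exact hmid l hl1 (lt_of_le_of_lt hl2 hk2)
    have ha2 : pS n a k = pS n a i + ∑ l ∈ Finset.Ioc i k, a l := by
      simp only [pS]; rw [← hun, Finset.sum_union hdisj]
    have hb2 : pS n b k = pS n b i + ∑ l ∈ Finset.Ioc i k, b l := by
      simp only [pS]; rw [← hun, Finset.sum_union hdisj]
    omega
  have hdom' : ∀ k, pS n b k ≤ pS n a' k := by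
    intro k
    rcases lt_or_ge k i with h | h
    · rw [hS_lt k h]; exact hdom k
    rcases lt_or_ge k j with h' | h'
    · have := hS_mid k h h'
      have := hkey k h h'
      omega
    · rw [hS_ge k h']; exact hdom k
  have hS_le : ∀ k, pS n a' k ≤ pS n a k := by
    intro k
    rcases lt_or_ge k i with h | h
    · rw [hS_lt k h]
    rcases lt_or_ge k j with h' | h'
    · have := hS_mid k h h'; omega
    · rw [hS_ge k h']
  have hmeas : ∑ k, (pS n a' k - pS n b k) < ∑ k, (pS n a k - pS n b k) := by
    apply Finset.sum_lt_sum
    · intro k _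
      have := hS_le k
      omega
    · refine ⟨i, Finset.mem_univ i, ?_⟩
      have h1 := hS_mid i le_rfl hij
      have h2 := hkey_i
      omega
  -- F sum decrease
  have hFsum : ∑ k, Fr (a' k) < ∑ k, Fr (a k) := by
    have hcomp : (fun k => Fr (a' k)) =
        Function.update (Function.update (fun k => Fr (a k)) i (Fr (a i - 1))) j (Fr (a j + 1)) := by
      funext k
      by_cases hk1 : k = j
      · subst hk1; rw [ha'j, Function.update_self]
      by_cases hk2 : k = i
      · subst hk2
        rw [ha'i, Function.update_of_ne hijne, Function.update_self]
      · rw [ha'k k hk2 hk1, Function.update_of_ne hk1, Function.update_of_ne hk2]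
    rw [hcomp]
    rw [Finset.sum_update_of_mem (Finset.mem_univ j)]
    have hi' : i ∈ Finset.univ \ {j} := Finset.mem_sdiff.mpr ⟨Finset.mem_univ i, by simp [hijne]⟩
    rw [Finset.sum_update_of_mem hi']
    rw [Finset.sum_eq_add_sum_sdiff_singleton_of_mem (Finset.mem_univ j) (fun k => Fr (a k))]
    rw [Finset.sum_eq_add_sum_sdiff_singleton_of_mem hi' (fun k => Fr (a k))]
    have hkeyF := F_step (x := a j) (y := a i) h2
    linarith
  exact ⟨a', ha', hstot.trans hs, hdom', hmeas, hFsum⟩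

lemma mono_core {n : ℕ} (b : Fin n → ℕ) (hb : Antitone b) :
    ∀ N (a : Fin n → ℕ), Antitone a → (∑ i, a i = ∑ i, b i) →
    (∀ i, pS n b i ≤ pS n a i) → (∑ i, (pS n a i - pS n b i)) ≤ N →
    ∑ i, Fr (b i) ≤ ∑ i, Fr (a i) := by
  intro N
  induction N with
  | zero =>
    intro a ha hs hdom hμ
    have hz : ∀ k ∈ Finset.univ, pS n a k - pS n b k = 0 :=
      (Finset.sum_eq_zero_iff).mp (Nat.le_zero.mp hμ)
    have heq : a = b := by
      apply pS_eq_imp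
      intro k
      have := hz k (Finset.mem_univ k)
      have := hdom k
      omega
    rw [heq]
  | succ N ih =>
    intro a ha hs hdom hμ
    by_cases hab : a = b
    · rw [hab]
    obtain ⟨a', ha', hs', hdom', hmeas, hlt⟩ := step a b ha hb hs hdom hab
    have hμ' : (∑ i, (pS n a' i - pS n b i)) ≤ N := by omega
    have := ih a' ha' hs' hdom' hμ'
    linarith

lemma core_strict {n : ℕ} (a b : Fin n → ℕ) (ha : Antitone a) (hb : Antitone b)
    (hs : ∑ i, a i = ∑ i, b i) (hdom : ∀ i, pS n b i ≤ pS n a i) (hne : a ≠ b) :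
    ∑ i, Fr (b i) < ∑ i, Fr (a i) := by
  obtain ⟨a', ha', hs', hdom', _, hlt⟩ := step a b ha hb hs hdom hne
  have := mono_core b hb (∑ i, (pS n a' i - pS n b i)) a' ha' hs' hdom' le_rfl
  linarith

lemma entropy_eq {n : ℕ} (m : ℕ) (hm : 0 < m) (c : Fin n → ℕ) (hc : ∑ i, c i = m) :
    (∑ i, -((c i : ℝ) / (m : ℝ)) * Real.logb 2 ((c i : ℝ) / (m : ℝ))) =
    ((m : ℝ) * Real.log m - ∑ i, Fr (c i)) / ((m : ℝ) * Real.log 2) := by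
  have hm' : (m : ℝ) ≠ 0 := Nat.cast_ne_zero.mpr hm.ne'
  have hlog2 : Real.log 2 ≠ 0 := by
    have : (0:ℝ) < Real.log 2 := Real.log_pos (by norm_num)
    linarith
  have hterm : ∀ x : ℕ, -((x : ℝ) / (m : ℝ)) * Real.logb 2 ((x : ℝ) / (m : ℝ)) =
      ((x : ℝ) * Real.log m - Fr x) / ((m : ℝ) * Real.log 2) := by
    intro x
    rcases Nat.eq_zero_or_pos x with h0 | h0
    · subst h0; simp [Fr]
    · have hx' : (x : ℝ) ≠ 0 := Nat.cast_ne_zero.mpr h0.ne'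
      rw [Real.logb, Real.log_div hx' hm', Fr]
      field_simp
      ring
  simp_rw [hterm]
  rw [← Finset.sum_div, Finset.sum_sub_distrib, ← Finset.sum_mul]
  have : ∑ i, ((c i : ℝ)) = (m : ℝ) := by
    rw [← Nat.cast_sum]
    exact_mod_cast congrArg (Nat.cast : ℕ → ℝ) hc
  rw [this]

end Stmt0Aux

/-- If non-increasing sequences of non-negative integers `a`, `b` have equal sum
`m > 0` and `a` dominates `b`, then `H(a/m) < H(b/m)`. -/
theorem stmt_0 (n m : ℕ) (a b : Fin n → ℕ)
    (ha : Antitone a) (hb : Antitone b)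
    (hsa : ∑ i, a i = m) (hsb : ∑ i, b i = m) (hm : 0 < m)
    (hdom : ∀ i : Fin n, ∑ j ∈ Finset.Iic i, b j ≤ ∑ j ∈ Finset.Iic i, a j)
    (hstrict : ∃ i : Fin n, ∑ j ∈ Finset.Iic i, b j < ∑ j ∈ Finset.Iic i, a j) :
    (∑ i, -((a i : ℝ) / (m : ℝ)) * Real.logb 2 ((a i : ℝ) / (m : ℝ))) <
    (∑ i, -((b i : ℝ) / (m : ℝ)) * Real.logb 2 ((b i : ℝ) / (m : ℝ))) := by
  have hne : a ≠ b := by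
    intro h
    obtain ⟨i, hi⟩ := hstrict
    rw [h] at hi
    exact lt_irrefl _ hi
  have hs : ∑ i, a i = ∑ i, b i := hsa.trans hsb.symm
  have hcore := Stmt0Aux.core_strict a b ha hb hs hdom hne
  rw [Stmt0Aux.entropy_eq m hm a hsa, Stmt0Aux.entropy_eq m hm b hsb]
  have hD : (0:ℝ) < (m : ℝ) * Real.log 2 := by
    have h1 : (0:ℝ) < (m : ℝ) := Nat.cast_pos.mpr hm
    have h2 : (0:ℝ) < Real.log 2 := Real.log_pos (by norm_num)
    positivity
  apply div_lt_div_of_pos_right _ hD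
  linarith
end

section
/- Let G be a finite loopless multigraph with m ≥ 1 edges. Call an orientation biased if every edge vw with deg(v) > deg(w) is oriented toward v. Then the entropy of the in-degree distribution of any biased orientation of G is at most OPT(G) + 1, where OPT(G) is the minimum entropy over all orientations of G. -/
open Finset Real

structure Multigraph (V E : Type) where
  ends : E → V × V
  loopless : ∀ e, (ends e).1 ≠ (ends e).2

namespace Multigraph

variable {V E : Type} [Fintype V] [DecidableEq V] [Fintype E]

/-- The head of edge `e` under orientation `o`. -/
def head (G : Multigraph V E) (o : E → Bool) (e : E) : V :=
  if o e then (G.ends e).1 else (G.ends e).2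

/-- The tail of edge `e` under orientation `o`. -/
def tail (G : Multigraph V E) (o : E → Bool) (e : E) : V :=
  if o e then (G.ends e).2 else (G.ends e).1

/-- In-degree of `v` in the orientation `o`. -/
def inDeg (G : Multigraph V E) (o : E → Bool) (v : V) : ℕ :=
  (Finset.univ.filter (fun e => G.head o e = v)).card

/-- Degree of `v` in `G` (loopless, so no double counting). -/
def deg (G : Multigraph V E) (v : V) : ℕ :=
  (Finset.univ.filter (fun e => (G.ends e).1 = v ∨ (G.ends e).2 = v)).card

/-- Entropy (base 2) of the in-degree distribution of the orientation `o`. -/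
noncomputable def entropy (G : Multigraph V E) (o : E → Bool) : ℝ :=
  ∑ v, -((G.inDeg o v : ℝ) / (Fintype.card E : ℝ)) *
      Real.logb 2 ((G.inDeg o v : ℝ) / (Fintype.card E : ℝ))

/-- Minimum entropy over all orientations of `G`. -/
noncomputable def OPT (G : Multigraph V E) : ℝ := ⨅ o : E → Bool, G.entropy o

/-- An orientation is biased if every edge is oriented toward an endpoint of
maximum degree (every edge `vw` with `deg v > deg w` points toward `v`). -/
def Biased (G : Multigraph V E) (o : E → Bool) : Prop :=
  ∀ e, G.deg (G.tail o e) ≤ G.deg (G.head o e)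

/-- Number of edges with at least one endpoint in `S`. -/
def edgeCover (G : Multigraph V E) (S : Finset V) : ℕ :=
  (Finset.univ.filter (fun e => (G.ends e).1 ∈ S ∨ (G.ends e).2 ∈ S)).card

end Multigraph

namespace MultigraphAux

open Multigraph

variable {V E : Type} [Fintype V] [DecidableEq V] [Fintype E]

lemma head_mem (G : Multigraph V E) (o : E → Bool) (e : E) :
    G.head o e = (G.ends e).1 ∨ G.head o e = (G.ends e).2 := by
  unfold Multigraph.head; split <;> simp

lemma head_eq_head_or_tail (G : Multigraph V E) (o o' : E → Bool) (e : E) :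
    G.head o' e = G.head o e ∨ G.head o' e = G.tail o e := by
  unfold Multigraph.head Multigraph.tail
  cases o e <;> cases o' e <;> simp

/-- Sum over vertices weighted by in-degree equals sum over edges of value at head. -/
lemma sum_inDeg_mul (G : Multigraph V E) (o : E → Bool) (f : V → ℝ) :
    ∑ v, (G.inDeg o v : ℝ) * f v = ∑ e, f (G.head o e) := by
  rw [← Finset.sum_fiberwise' Finset.univ (G.head o) f]
  refine Finset.sum_congr rfl fun v _ => ?_
  rw [Finset.sum_const]
  simp [Multigraph.inDeg, nsmul_eq_mul]

lemma sum_inDeg (G : Multigraph V E) (o : E → Bool) :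
    ∑ v, (G.inDeg o v : ℕ) = Fintype.card E := by
  classical
  unfold Multigraph.inDeg
  rw [← Finset.card_univ]
  exact (Finset.card_eq_sum_card_fiberwise (fun e _ => Finset.mem_univ (G.head o e))).symm

lemma sum_deg (G : Multigraph V E) :
    ∑ v, G.deg v = 2 * Fintype.card E := by
  classical
  unfold Multigraph.deg
  simp_rw [Finset.card_filter]
  rw [Finset.sum_comm]
  have : ∀ e : E, (∑ v : V, if (G.ends e).1 = v ∨ (G.ends e).2 = v then 1 else 0) = 2 := by
    intro e
    rw [← Finset.card_filter]
    have : (Finset.univ.filter (fun v => (G.ends e).1 = v ∨ (G.ends e).2 = v))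
        = {(G.ends e).1, (G.ends e).2} := by
      ext v
      simp [eq_comm]
    rw [this, Finset.card_pair (G.loopless e)]
  rw [Finset.sum_congr rfl fun e _ => this e, Finset.sum_const, Finset.card_univ,
    smul_eq_mul, mul_comm]

lemma inDeg_le_deg (G : Multigraph V E) (o : E → Bool) (v : V) :
    G.inDeg o v ≤ G.deg v := by
  apply Finset.card_le_card
  intro e he
  simp only [Finset.mem_filter, Finset.mem_univ, true_and] at he ⊢
  rcases head_mem G o e with h | h <;> rw [← he, h] <;> simp

lemma one_le_deg_head (G : Multigraph V E) (o : E → Bool) (e : E) :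
    1 ≤ G.deg (G.head o e) := by
  rw [Nat.one_le_iff_ne_zero, ← Nat.pos_iff_ne_zero]
  apply Finset.card_pos.mpr
  refine ⟨e, ?_⟩
  simp only [Finset.mem_filter, Finset.mem_univ, true_and]
  rcases head_mem G o e with h | h
  · exact Or.inl h.symm
  · exact Or.inr h.symm

/-- Pointwise logarithmic bound: `ρ·(log₂ d − log₂ ρ) ≤ ρ + (d/2 − ρ)/ln 2`. -/
lemma pointwise (ρ d : ℕ) (h : ρ ≤ d) :
    (ρ : ℝ) * Real.logb 2 d - (ρ : ℝ) * Real.logb 2 ρ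
      ≤ (ρ : ℝ) + ((d : ℝ)/2 - ρ) / Real.log 2 := by
  have hlog2 : (0:ℝ) < Real.log 2 := Real.log_pos (by norm_num)
  rcases Nat.eq_zero_or_pos ρ with hρ | hρ
  · subst hρ
    simp only [Nat.cast_zero, zero_mul, sub_zero, zero_add, sub_zero]
    positivity
  · have hρR : (0:ℝ) < ρ := by exact_mod_cast hρ
    have hdR : (0:ℝ) < d := lt_of_lt_of_le hρR (by exact_mod_cast h)
    have key : Real.log ((d:ℝ) / (2 * ρ)) ≤ (d:ℝ) / (2 * ρ) - 1 :=
      Real.log_le_sub_one_of_pos (by positivity)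
    have hsplit : Real.log ((d:ℝ) / (2 * ρ)) =
        Real.log d - Real.log 2 - Real.log ρ := by
      rw [Real.log_div (ne_of_gt hdR) (by positivity), Real.log_mul (by norm_num)
        (ne_of_gt hρR)]
      ring
    have h1 : Real.log d - Real.log ρ ≤ Real.log 2 + (d:ℝ) / (2 * ρ) - 1 := by
      rw [hsplit] at key; linarith
    have h2 : (ρ:ℝ) * (Real.log d - Real.log ρ) ≤
        (ρ:ℝ) * Real.log 2 + (d:ℝ)/2 - ρ := by
      have := mul_le_mul_of_nonneg_left h1 (le_of_lt hρR)
      have hq : (ρ:ℝ) * ((d:ℝ) / (2 * ρ)) = (d:ℝ)/2 := by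
        field_simp
      nlinarith [this, hq]
    unfold Real.logb
    calc (ρ:ℝ) * (Real.log d / Real.log 2) - (ρ:ℝ) * (Real.log ρ / Real.log 2)
        = ((ρ:ℝ) * (Real.log d - Real.log ρ)) / Real.log 2 := by
          field_simp
      _ ≤ ((ρ:ℝ) * Real.log 2 + (d:ℝ)/2 - ρ) / Real.log 2 := by
          gcongr
      _ = (ρ:ℝ) + ((d:ℝ)/2 - ρ) / Real.log 2 := by
          field_simp; ring

/-- `L(o) = Σ_v ρ_v log₂ ρ_v`. -/
noncomputable def L (G : Multigraph V E) (o : E → Bool) : ℝ :=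
  ∑ v, (G.inDeg o v : ℝ) * Real.logb 2 (G.inDeg o v)

lemma entropy_eq (G : Multigraph V E) (o : E → Bool) (hm : 1 ≤ Fintype.card E) :
    G.entropy o = Real.logb 2 (Fintype.card E) - L G o / (Fintype.card E) := by
  have hmR : (0:ℝ) < (Fintype.card E : ℝ) := by exact_mod_cast hm
  unfold Multigraph.entropy L
  have hterm : ∀ v : V,
      -((G.inDeg o v : ℝ) / (Fintype.card E : ℝ)) *
        Real.logb 2 ((G.inDeg o v : ℝ) / (Fintype.card E : ℝ))
      = (G.inDeg o v : ℝ) / (Fintype.card E : ℝ) * Real.logb 2 (Fintype.card E)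
        - ((G.inDeg o v : ℝ) * Real.logb 2 (G.inDeg o v)) / (Fintype.card E : ℝ) := by
    intro v
    rcases Nat.eq_zero_or_pos (G.inDeg o v) with h | h
    · rw [h]; simp
    · have hρ : (0:ℝ) < (G.inDeg o v : ℝ) := by exact_mod_cast h
      rw [Real.logb_div (ne_of_gt hρ) (ne_of_gt hmR)]
      field_simp
      ring
  rw [Finset.sum_congr rfl fun v _ => hterm v, Finset.sum_sub_distrib]
  have hρsum : ∑ v, (G.inDeg o v : ℝ) = (Fintype.card E : ℝ) := by
    exact_mod_cast congrArg (Nat.cast (R := ℝ)) (sum_inDeg G o)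
  have e1 : ∑ v, (G.inDeg o v : ℝ) / (Fintype.card E : ℝ) * Real.logb 2 (Fintype.card E)
      = Real.logb 2 (Fintype.card E) := by
    rw [← Finset.sum_mul, ← Finset.sum_div, hρsum, div_self (ne_of_gt hmR), one_mul]
  have e2 : ∑ v, ((G.inDeg o v : ℝ) * Real.logb 2 (G.inDeg o v)) / (Fintype.card E : ℝ)
      = (∑ v, (G.inDeg o v : ℝ) * Real.logb 2 (G.inDeg o v)) / (Fintype.card E : ℝ) := by
    rw [← Finset.sum_div]
  rw [e1, e2]

/-- The key comparison: for a biased orientation `o` and any orientation `o'`,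
`L(o') ≤ L(o) + m`. -/
lemma L_le (G : Multigraph V E) (o o' : E → Bool) (hb : G.Biased o) :
    L G o' ≤ L G o + (Fintype.card E : ℝ) := by
  have hlog2 : (0:ℝ) < Real.log 2 := Real.log_pos (by norm_num)
  -- Step 1: L(o') ≤ Σ_e log₂ deg(head o e)
  have step1 : L G o' ≤ ∑ e, Real.logb 2 (G.deg (G.head o e)) := by
    unfold L
    rw [sum_inDeg_mul G o' (fun v => Real.logb 2 (G.inDeg o' v))]
    apply Finset.sum_le_sum
    intro e _
    have hdeg1 : 1 ≤ G.deg (G.head o e) := one_le_deg_head G o e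
    have hle : G.inDeg o' (G.head o' e) ≤ G.deg (G.head o e) := by
      have h1 : G.inDeg o' (G.head o' e) ≤ G.deg (G.head o' e) := inDeg_le_deg G o' _
      rcases head_eq_head_or_tail G o o' e with h | h
      · rw [h] at h1 ⊢; exact h1
      · rw [h] at h1 ⊢; exact h1.trans (hb e)
    rcases Nat.eq_zero_or_pos (G.inDeg o' (G.head o' e)) with h0 | h0
    · rw [h0]
      simp only [Nat.cast_zero, Real.logb_zero]
      apply Real.logb_nonneg (by norm_num)
      exact_mod_cast hdeg1
    · exact Real.logb_le_logb_of_le (by norm_num) (by exact_mod_cast h0)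
        (by exact_mod_cast hle)
  -- Step 2: Σ_e log₂ deg(head o e) = Σ_v ρ_v log₂ d_v
  have step2 : ∑ e, Real.logb 2 (G.deg (G.head o e))
      = ∑ v, (G.inDeg o v : ℝ) * Real.logb 2 (G.deg v) :=
    (sum_inDeg_mul G o (fun v => Real.logb 2 (G.deg v))).symm
  -- Step 3: Σ_v ρ_v log₂ d_v ≤ L(o) + m
  have step3 : ∑ v, (G.inDeg o v : ℝ) * Real.logb 2 (G.deg v)
      ≤ L G o + (Fintype.card E : ℝ) := by
    unfold L
    have hsum : ∑ v, ((G.inDeg o v : ℝ) * Real.logb 2 (G.deg v)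
        - (G.inDeg o v : ℝ) * Real.logb 2 (G.inDeg o v))
        ≤ ∑ v, ((G.inDeg o v : ℝ) + ((G.deg v : ℝ)/2 - (G.inDeg o v : ℝ)) / Real.log 2) :=
      Finset.sum_le_sum fun v _ => pointwise (G.inDeg o v) (G.deg v) (inDeg_le_deg G o v)
    have hρ : ∑ v, (G.inDeg o v : ℝ) = (Fintype.card E : ℝ) := by
      exact_mod_cast congrArg (Nat.cast (R := ℝ)) (sum_inDeg G o)
    have hd : ∑ v, (G.deg v : ℝ) = 2 * (Fintype.card E : ℝ) := by
      exact_mod_cast congrArg (Nat.cast (R := ℝ)) (sum_deg G)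
    have hrhs : ∑ v, ((G.inDeg o v : ℝ) + ((G.deg v : ℝ)/2 - (G.inDeg o v : ℝ)) / Real.log 2)
        = (Fintype.card E : ℝ) := by
      rw [Finset.sum_add_distrib, hρ]
      have : ∑ v, ((G.deg v : ℝ)/2 - (G.inDeg o v : ℝ)) / Real.log 2
          = (∑ v, ((G.deg v : ℝ)/2 - (G.inDeg o v : ℝ))) / Real.log 2 := by
        rw [Finset.sum_div]
      rw [this, Finset.sum_sub_distrib, ← Finset.sum_div, hd, hρ]
      field_simp
      ring
    rw [Finset.sum_sub_distrib] at hsum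
    rw [hrhs] at hsum
    linarith
  rw [step2] at step1
  linarith

end MultigraphAux

/-- Any biased orientation has entropy at most `OPT(G) + 1`. -/
theorem stmt_6 {V E : Type} [Fintype V] [DecidableEq V] [Fintype E]
    (G : Multigraph V E) (o : E → Bool) (hm : 1 ≤ Fintype.card E)
    (hb : G.Biased o) :
    G.entropy o ≤ G.OPT + 1 := by
  have hmR : (0:ℝ) < (Fintype.card E : ℝ) := by exact_mod_cast hm
  have key : ∀ o' : E → Bool, G.entropy o ≤ G.entropy o' + 1 := by
    intro o'
    rw [MultigraphAux.entropy_eq G o hm, MultigraphAux.entropy_eq G o' hm]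
    have hL := MultigraphAux.L_le G o o' hb
    have : MultigraphAux.L G o' / (Fintype.card E : ℝ)
        ≤ MultigraphAux.L G o / (Fintype.card E : ℝ) + 1 := by
      rw [div_add' _ _ _ (ne_of_gt hmR)] at *
      rw [div_le_div_iff₀ hmR hmR]
      nlinarith [hL]
    linarith
  have : G.entropy o - 1 ≤ G.OPT := by
    unfold Multigraph.OPT
    apply le_ciInf
    intro o'
    linarith [key o']
  linarith
end

section
/- For the cycle graph C_n (n ≥ 3), the minimum entropy of an orientation is achieved by the cyclic orientation giving every vertex in-degree 1, with entropy log₂ n. -/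
open Finset Real

private lemma evens_card (n : ℕ) :
    ((Finset.range n).filter (fun i => i % 2 = 0)).card = (n + 1) / 2 := by
  induction n with
  | zero => simp
  | succ m ih =>
    rw [Finset.range_add_one, Finset.filter_insert]
    by_cases h : m % 2 = 0
    · rw [if_pos h, Finset.card_insert_of_notMem (by simp)]
      omega
    · rw [if_neg h]; omega

open Finset Real

variable {n : ℕ}

private lemma indeg_eq (hn : 3 ≤ n) (G : Multigraph (Fin n) (Fin n))
    (hG : ∀ i : Fin n, G.ends i = (i, i + ⟨1, by linarith⟩)) (o : Fin n → Bool) (v : Fin n) :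
    G.inDeg o v = (if o v then 1 else 0) + (if o (v - ⟨1, by linarith⟩) then 0 else 1) := by
  classical
  haveI : NeZero n := ⟨by omega⟩
  set one : Fin n := ⟨1, by linarith⟩ with hone
  have hne : v ≠ v - one := by
    intro h
    have : one = 0 := by
      have := sub_eq_self.mp h.symm
      exact this
    simp [hone, Fin.ext_iff] at this
  have hhead : ∀ e, G.head o e = v ↔
      ((o e = true ∧ e = v) ∨ (o e = false ∧ e = v - one)) := by
    intro e
    unfold Multigraph.head
    rw [hG e]
    cases h : o e with
    | true => simp [h]
    | false =>
      simp only [h, if_false, Bool.false_eq_true, false_and, false_or, true_and]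
      exact eq_sub_iff_add_eq.symm
  unfold Multigraph.inDeg
  cases hv : o v <;> cases hw : o (v - one)
  · -- false false : filter = {v - one}
    have : Finset.univ.filter (fun e => G.head o e = v) = {v - one} := by
      ext e
      simp only [Finset.mem_filter, Finset.mem_univ, true_and, hhead, Finset.mem_singleton]
      constructor
      · rintro (⟨he, rfl⟩ | ⟨he, rfl⟩)
        · rw [hv] at he; simp at he
        · rfl
      · rintro rfl; exact Or.inr ⟨hw, rfl⟩
    simp [this]
  · -- false true : filter = ∅
    have : Finset.univ.filter (fun e => G.head o e = v) = ∅ := by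
      ext e
      simp only [Finset.mem_filter, Finset.mem_univ, true_and, hhead, Finset.notMem_empty,
        iff_false]
      rintro (⟨he, rfl⟩ | ⟨he, rfl⟩)
      · rw [hv] at he; simp at he
      · rw [hw] at he; simp at he
    simp [this]
  · -- true false : filter = {v, v - one}
    have : Finset.univ.filter (fun e => G.head o e = v) = {v, v - one} := by
      ext e
      simp only [Finset.mem_filter, Finset.mem_univ, true_and, hhead, Finset.mem_insert,
        Finset.mem_singleton]
      constructor
      · rintro (⟨he, rfl⟩ | ⟨he, rfl⟩)
        · exact Or.inl rfl
        · exact Or.inr rfl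
      · rintro (rfl | rfl)
        · exact Or.inl ⟨hv, rfl⟩
        · exact Or.inr ⟨hw, rfl⟩
    rw [this, Finset.card_pair hne]
    simp [hv, hw]
  · -- true true : filter = {v}
    have : Finset.univ.filter (fun e => G.head o e = v) = {v} := by
      ext e
      simp only [Finset.mem_filter, Finset.mem_univ, true_and, hhead, Finset.mem_singleton]
      constructor
      · rintro (⟨he, rfl⟩ | ⟨he, rfl⟩)
        · rfl
        · rw [hw] at he; simp at he
      · rintro rfl; exact Or.inl ⟨hv, rfl⟩
    simp [this]

private lemma sum_indeg (G : Multigraph (Fin n) (Fin n)) (o : Fin n → Bool) :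
    ∑ v, G.inDeg o v = n := by
  classical
  unfold Multigraph.inDeg
  rw [← Finset.card_eq_sum_card_fiberwise (f := G.head o) (t := Finset.univ)
    (fun e _ => Finset.mem_univ _)]
  simp

private lemma k2_le (hn : 3 ≤ n) (S : Finset (Fin n))
    (hS : ∀ v ∈ S, v + (⟨1, by linarith⟩ : Fin n) ∉ S) : 2 * S.card ≤ n := by
  classical
  haveI : NeZero n := ⟨by omega⟩
  set one : Fin n := ⟨1, by linarith⟩ with hone
  have hne : ∀ v : Fin n, v ≠ v + one := by
    intro v h
    have : one = 0 := by
      have := left_eq_add.mp h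
      exact this
    simp [hone, Fin.ext_iff] at this
  have hdisj : ∀ x ∈ S, ∀ y ∈ S, x ≠ y →
      Disjoint ({x, x + one} : Finset (Fin n)) {y, y + one} := by
    intro x hx y hy hxy
    simp only [Finset.disjoint_insert_left, Finset.disjoint_singleton_left,
      Finset.mem_insert, Finset.mem_singleton]
    constructor
    · push_neg
      refine ⟨hxy, ?_⟩
      intro h; exact hS y hy (h ▸ hx)
    · push_neg
      refine ⟨?_, ?_⟩
      · intro h; exact hS x hx (h ▸ hy)
      · intro h; exact hxy (add_right_cancel h)
  have h1 : (S.biUnion (fun v => ({v, v + one} : Finset (Fin n)))).card = ∑ v ∈ S, 2 := by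
    rw [Finset.card_biUnion hdisj]
    exact Finset.sum_congr rfl fun v _ => Finset.card_pair (hne v)
  have h2 : (S.biUnion (fun v => ({v, v + one} : Finset (Fin n)))).card ≤ n := by
    have := Finset.card_le_card (Finset.subset_univ
      (S.biUnion (fun v => ({v, v + one} : Finset (Fin n)))))
    simpa using this
  rw [h1, Finset.sum_const, smul_eq_mul] at h2
  omega

private lemma pointwise (hn : 3 ≤ n) (d : ℕ) (hd : d ≤ 2) :
    -((d : ℝ) / n) * Real.logb 2 ((d : ℝ) / n)
      = d * (-(1 / (n : ℝ)) * Real.logb 2 (1 / (n : ℝ)))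
        - (if d = 2 then 2 / (n : ℝ) else 0) := by
  have hn0 : (n : ℝ) ≠ 0 := by positivity
  interval_cases d
  · simp
  · simp
  · rw [if_pos rfl]
    push_cast
    have h2 : (2 : ℝ) / n = 2 * (1 / n) := by ring
    rw [h2, Real.logb_mul (by norm_num) (by positivity),
      Real.logb_self_eq_one (by norm_num)]
    ring

private lemma entropy_eq (hn : 3 ≤ n) (G : Multigraph (Fin n) (Fin n))
    (hG : ∀ i : Fin n, G.ends i = (i, i + ⟨1, by linarith⟩)) (o : Fin n → Bool) :
    G.entropy o = n * (-(1 / (n : ℝ)) * Real.logb 2 (1 / (n : ℝ)))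
      - ((Finset.univ.filter (fun v => G.inDeg o v = 2)).card : ℝ) * (2 / (n : ℝ)) := by
  classical
  have hle : ∀ v, G.inDeg o v ≤ 2 := by
    intro v
    rw [indeg_eq hn G hG o v]
    split <;> split <;> omega
  unfold Multigraph.entropy
  have hcard : (Fintype.card (Fin n) : ℝ) = (n : ℝ) := by simp
  calc ∑ v, -((G.inDeg o v : ℝ) / (Fintype.card (Fin n) : ℝ)) *
        Real.logb 2 ((G.inDeg o v : ℝ) / (Fintype.card (Fin n) : ℝ))
      = ∑ v, ((G.inDeg o v : ℝ) * (-(1 / (n : ℝ)) * Real.logb 2 (1 / (n : ℝ)))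
          - (if G.inDeg o v = 2 then 2 / (n : ℝ) else 0)) := by
        refine Finset.sum_congr rfl fun v _ => ?_
        rw [hcard]
        exact pointwise hn _ (hle v)
    _ = (∑ v, (G.inDeg o v : ℝ)) * (-(1 / (n : ℝ)) * Real.logb 2 (1 / (n : ℝ)))
          - ∑ v, (if G.inDeg o v = 2 then 2 / (n : ℝ) else 0) := by
        rw [Finset.sum_sub_distrib, Finset.sum_mul]
    _ = n * (-(1 / (n : ℝ)) * Real.logb 2 (1 / (n : ℝ)))
          - ((Finset.univ.filter (fun v => G.inDeg o v = 2)).card : ℝ) * (2 / (n : ℝ)) := by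
        congr 1
        · congr 1
          rw [← Nat.cast_sum, sum_indeg G o]
        · rw [← Finset.sum_filter, Finset.sum_const, nsmul_eq_mul]

private lemma indeg_two_iff (hn : 3 ≤ n) (G : Multigraph (Fin n) (Fin n))
    (hG : ∀ i : Fin n, G.ends i = (i, i + ⟨1, by linarith⟩)) (o : Fin n → Bool) (v : Fin n) :
    G.inDeg o v = 2 ↔ (o v = true ∧ o (v - ⟨1, by linarith⟩) = false) := by
  rw [indeg_eq hn G hG o v]
  split <;> split <;> simp_all

private lemma target_eq (hn : 3 ≤ n) :
    ((n / 2 : ℕ) : ℝ) * (-(2 / (n : ℝ)) * Real.logb 2 (2 / (n : ℝ))) +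
       ((n - 2 * (n / 2) : ℕ) : ℝ) * (-(1 / (n : ℝ)) * Real.logb 2 (1 / (n : ℝ)))
    = n * (-(1 / (n : ℝ)) * Real.logb 2 (1 / (n : ℝ)))
        - ((n / 2 : ℕ) : ℝ) * (2 / (n : ℝ)) := by
  have hp := pointwise hn 2 le_rfl
  rw [if_pos rfl] at hp
  push_cast at hp
  have hle : 2 * (n / 2) ≤ n := by omega
  have hcast : ((n - 2 * (n / 2) : ℕ) : ℝ) = (n : ℝ) - 2 * ((n / 2 : ℕ) : ℝ) := by
    push_cast [Nat.cast_sub hle]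
    ring
  rw [hcast, hp]
  ring

private lemma count_alt (hn : 3 ≤ n) (G : Multigraph (Fin n) (Fin n))
    (hG : ∀ i : Fin n, G.ends i = (i, i + ⟨1, by linarith⟩)) :
    (Finset.univ.filter
      (fun v => G.inDeg (fun e : Fin n => decide (e.val % 2 = 0)) v = 2)).card = n / 2 := by
  classical
  haveI : NeZero n := ⟨by omega⟩
  have hsub : ∀ v : Fin n, (v - (⟨1, by linarith⟩ : Fin n)).val
      = if v.val = 0 then n - 1 else v.val - 1 := by
    intro v
    rw [Fin.sub_def]
    simp only []
    by_cases h0 : v.val = 0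
    · rw [if_pos h0, h0]
      simp [Nat.mod_eq_of_lt (by omega : n - 1 < n)]
    · rw [if_neg h0]
      have hv := v.isLt
      have : (n - 1) + v.val = (v.val - 1) + n := by omega
      rw [this, Nat.add_mod_right, Nat.mod_eq_of_lt (by omega)]
  have hiff : ∀ v : Fin n,
      (G.inDeg (fun e : Fin n => decide (e.val % 2 = 0)) v = 2)
        ↔ (v.val % 2 = 0 ∧ (v.val ≠ 0 ∨ n % 2 = 0)) := by
    intro v
    rw [indeg_two_iff hn G hG]
    simp only [decide_eq_true_eq, decide_eq_false_iff_not]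
    rw [hsub v]
    have hv := v.isLt
    by_cases h0 : v.val = 0
    · rw [if_pos h0]; omega
    · rw [if_neg h0]; omega
  have hbij : (Finset.univ.filter
      (fun v => G.inDeg (fun e : Fin n => decide (e.val % 2 = 0)) v = 2)).card
      = ((Finset.range n).filter (fun i => i % 2 = 0 ∧ (i ≠ 0 ∨ n % 2 = 0))).card := by
    refine Finset.card_bij' (fun v _ => v.val)
      (fun i hi => ⟨i, Finset.mem_range.mp (Finset.mem_filter.mp hi).1⟩) ?_ ?_ ?_ ?_
    · intro v hv
      rw [Finset.mem_filter] at hv ⊢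
      exact ⟨Finset.mem_range.mpr v.isLt, (hiff v).mp hv.2⟩
    · intro i hi
      rw [Finset.mem_filter] at hi ⊢
      exact ⟨Finset.mem_univ _, (hiff _).mpr hi.2⟩
    · intro v hv; rfl
    · intro i hi; rfl
  rw [hbij]
  by_cases hpar : n % 2 = 0
  · have : (Finset.range n).filter (fun i => i % 2 = 0 ∧ (i ≠ 0 ∨ n % 2 = 0))
        = (Finset.range n).filter (fun i => i % 2 = 0) := by
      apply Finset.filter_congr
      intro i _
      simp [hpar]
    rw [this, evens_card]
    omega
  · have : (Finset.range n).filter (fun i => i % 2 = 0 ∧ (i ≠ 0 ∨ n % 2 = 0))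
        = ((Finset.range n).filter (fun i => i % 2 = 0)).erase 0 := by
      ext i
      simp only [Finset.mem_filter, Finset.mem_erase, Finset.mem_range]
      omega
    have h0mem : (0 : ℕ) ∈ (Finset.range n).filter (fun i => i % 2 = 0) := by
      refine Finset.mem_filter.mpr ⟨Finset.mem_range.mpr (by omega), by omega⟩
    rw [this, Finset.card_erase_of_mem h0mem, evens_card]
    omega

/-- For the cycle `C_n` (`n ≥ 3`), the minimum entropy over orientations equals the
entropy of the in-degree sequence having `⌊n/2⌋` vertices of in-degree 2,
`n − 2⌊n/2⌋` of in-degree 1, and the rest 0. -/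
theorem stmt_7 (n : ℕ) (hn : 3 ≤ n) (G : Multigraph (Fin n) (Fin n))
    (hG : ∀ i : Fin n, G.ends i = (i, i + ⟨1, by omega⟩)) :
    IsLeast (Set.range G.entropy)
      ((n / 2 : ℕ) * (-(2 / (n : ℝ)) * Real.logb 2 (2 / (n : ℝ))) +
       ((n - 2 * (n / 2) : ℕ) : ℝ) * (-(1 / (n : ℝ)) * Real.logb 2 (1 / (n : ℝ)))) := by
  classical
  haveI : NeZero n := ⟨by omega⟩
  rw [target_eq hn]
  constructor
  · exact ⟨fun e : Fin n => decide (e.val % 2 = 0), by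
      rw [entropy_eq hn G hG, count_alt hn G hG]⟩
  · rintro x ⟨o, rfl⟩
    rw [entropy_eq hn G hG o]
    have hS : ∀ v ∈ Finset.univ.filter (fun v => G.inDeg o v = 2),
        v + (⟨1, by omega⟩ : Fin n) ∉ Finset.univ.filter (fun v => G.inDeg o v = 2) := by
      intro v hv hc
      rw [Finset.mem_filter] at hv hc
      have h1 := (indeg_two_iff hn G hG o v).mp hv.2
      have h2 := (indeg_two_iff hn G hG o _).mp hc.2
      rw [add_sub_cancel_right] at h2
      rw [h1.1] at h2
      exact absurd h2.2 (by simp)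
    have hk := k2_le hn _ hS
    have hk2 : ((Finset.univ.filter (fun v => G.inDeg o v = 2)).card : ℝ)
        ≤ ((n / 2 : ℕ) : ℝ) := by
      exact_mod_cast (by omega :
        (Finset.univ.filter (fun v => G.inDeg o v = 2)).card ≤ n / 2)
    exact sub_le_sub_left (mul_le_mul_of_nonneg_right hk2 (by positivity)) _
end

section
/- For an even cycle C_{2k}, OPT(C_{2k}) = log₂ k (achieved by orienting so that k vertices have in-degree 2 and k have in-degree 0), while every biased orientation (in particular the cyclic orientation with all in-degrees 1) has entropy log₂(2k) = OPT(C_{2k}) + 1. Hence the additive bound of 1 bit for biased orientations is tight. -/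
open Finset Real

namespace Multigraph

variable {V E : Type} [Fintype V] [DecidableEq V] [Fintype E]

/-- Sum of in-degrees equals number of edges. -/
lemma sum_inDeg (G : Multigraph V E) (o : E → Bool) :
    ∑ v, G.inDeg o v = Fintype.card E := by
  rw [← Finset.card_univ]
  exact (Finset.card_eq_sum_card_fiberwise (f := G.head o)
    (fun x _ => Finset.mem_univ _)).symm

end Multigraph

lemma fin_one_val (k : ℕ) [NeZero (2*k)] (hk : 2 ≤ k) : (1 : Fin (2 * k)).val = 1 := by
  rw [Fin.val_one']
  exact Nat.mod_eq_of_lt (by omega)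

lemma fin_one_ne_zero (k : ℕ) [NeZero (2*k)] (hk : 2 ≤ k) : (1 : Fin (2 * k)) ≠ 0 := by
  intro h
  have := congrArg Fin.val h
  rw [fin_one_val k hk] at this
  simp at this

/-- For the even cycle `C_{2k}` (`k ≥ 2`): `OPT = log₂ k`, while the cyclic
orientation (all in-degrees 1, which is biased since all degrees are equal) has
entropy `log₂(2k) = OPT + 1`; the additive bound of 1 bit is tight. -/
theorem stmt_8 (k : ℕ) (hk : 2 ≤ k) (G : Multigraph (Fin (2 * k)) (Fin (2 * k)))
    (hG : ∀ i : Fin (2 * k), G.ends i = (i, i + ⟨1, by omega⟩)) :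
    G.OPT = Real.logb 2 (k : ℝ) ∧
    G.Biased (fun _ => false) ∧
    G.entropy (fun _ => false) = Real.logb 2 (2 * (k : ℝ)) ∧
    Real.logb 2 (2 * (k : ℝ)) = G.OPT + 1 := by
  haveI : NeZero (2 * k) := ⟨by omega⟩
  have h1 : (⟨1, by omega⟩ : Fin (2 * k)) = 1 := by
    apply Fin.ext; rw [fin_one_val k hk]
  have hG' : ∀ i : Fin (2 * k), G.ends i = (i, i + 1) := by
    intro i; rw [hG i, h1]
  have hone : (1 : Fin (2 * k)) ≠ 0 := fin_one_ne_zero k hk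
  have hvsub : ∀ v : Fin (2 * k), v - 1 ≠ v := by
    intro v h
    apply hone
    have := congrArg (fun x => x - v + 1) h
    simpa using this.symm
  have hcardE : (Fintype.card (Fin (2 * k)) : ℝ) = 2 * (k : ℝ) := by
    rw [Fintype.card_fin]; push_cast; ring
  have hK0 : (0:ℝ) < (k : ℝ) := by exact_mod_cast (by omega : 0 < k)
  have hKne : ((k:ℝ)) ≠ 0 := ne_of_gt hK0
  have h2K0 : (0:ℝ) < 2 * (k:ℝ) := by linarith
  -- all degrees equal 2
  have hdeg : ∀ v, G.deg v = 2 := by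
    intro v
    have hset : (Finset.univ.filter
        (fun e => (G.ends e).1 = v ∨ (G.ends e).2 = v)) = {v, v - 1} := by
      ext e
      simp only [Finset.mem_filter, Finset.mem_univ, true_and, hG',
        Finset.mem_insert, Finset.mem_singleton]
      constructor
      · rintro (h | h)
        · left; exact h
        · right; exact eq_sub_iff_add_eq.mpr h
      · rintro (h | h)
        · left; exact h
        · right; exact eq_sub_iff_add_eq.mp h
    rw [Multigraph.deg, hset, Finset.card_pair (fun h => hvsub v h.symm)]
  have hbiased : G.Biased (fun _ => false) := fun e => le_of_eq (by rw [hdeg, hdeg])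
  -- cyclic orientation: all in-degrees 1
  have hhead_false : ∀ e : Fin (2*k), G.head (fun _ => false) e = e + 1 := by
    intro e; simp [Multigraph.head, hG']
  have hin1 : ∀ v, G.inDeg (fun _ => false) v = 1 := by
    intro v
    rw [Multigraph.inDeg]
    have hset : (Finset.univ.filter
        (fun e => G.head (fun _ => false) e = v)) = {v - 1} := by
      ext e; simp [hhead_false, eq_sub_iff_add_eq]
    rw [hset, Finset.card_singleton]
  have hent_false : G.entropy (fun _ => false) = Real.logb 2 (2 * (k:ℝ)) := by
    rw [Multigraph.entropy]
    have hterm : ∀ v : Fin (2*k),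
        -((G.inDeg (fun _ => false) v : ℝ) / (Fintype.card (Fin (2*k)) : ℝ)) *
          Real.logb 2 ((G.inDeg (fun _ => false) v : ℝ) / (Fintype.card (Fin (2*k)) : ℝ))
        = (2*(k:ℝ))⁻¹ * Real.logb 2 (2*(k:ℝ)) := by
      intro v
      rw [hin1 v, hcardE, Nat.cast_one, one_div, Real.logb_inv]
      ring
    rw [Finset.sum_congr rfl (fun v _ => hterm v), Finset.sum_const,
      Finset.card_univ, Fintype.card_fin, nsmul_eq_mul]
    push_cast
    field_simp
  -- the optimal orientation
  set ostar : Fin (2*k) → Bool := fun e => decide (e.val % 2 = 1) with hostar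
  have hhead_star : ∀ e : Fin (2*k),
      G.head ostar e = if e.val % 2 = 1 then e else e + 1 := by
    intro e
    by_cases h : e.val % 2 = 1 <;> simp [Multigraph.head, hG', hostar, h]
  have hpar : ∀ e : Fin (2*k), (e + 1).val % 2 = (e.val + 1) % 2 := by
    intro e
    have h : (e + 1).val = (e.val + 1) % (2*k) := by
      rw [Fin.add_def, fin_one_val k hk]
    rw [h, Nat.mod_mod_of_dvd _ ⟨k, rfl⟩]
  have hinstar : ∀ v : Fin (2*k),
      G.inDeg ostar v = if v.val % 2 = 1 then 2 else 0 := by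
    intro v
    rw [Multigraph.inDeg]
    by_cases hv : v.val % 2 = 1
    · rw [if_pos hv]
      have hset : (Finset.univ.filter (fun e => G.head ostar e = v))
          = {v, v - 1} := by
        ext e
        simp only [Finset.mem_filter, Finset.mem_univ, true_and, hhead_star,
          Finset.mem_insert, Finset.mem_singleton]
        constructor
        · intro h
          by_cases he : e.val % 2 = 1
          · rw [if_pos he] at h; left; exact h
          · rw [if_neg he] at h; right; exact eq_sub_iff_add_eq.mpr h
        · rintro (rfl | h)
          · rw [if_pos hv]
          · have he1 : e + 1 = v := eq_sub_iff_add_eq.mp h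
            have hpe := hpar e
            rw [he1] at hpe
            have he : ¬ (e.val % 2 = 1) := by omega
            rw [if_neg he, he1]
      rw [hset, Finset.card_pair (fun h => hvsub v h.symm)]
    · rw [if_neg hv]
      have hset : (Finset.univ.filter (fun e => G.head ostar e = v)) = ∅ := by
        ext e
        simp only [Finset.mem_filter, Finset.mem_univ, true_and,
          Finset.notMem_empty, iff_false, hhead_star]
        intro h
        by_cases he : e.val % 2 = 1
        · rw [if_pos he] at h; subst h; exact hv he
        · rw [if_neg he] at h
          have hpe := hpar e
          rw [h] at hpe
          omega
      rw [hset, Finset.card_empty]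
  have hent_star : G.entropy ostar = Real.logb 2 (k:ℝ) := by
    rw [Multigraph.entropy]
    have hterm : ∀ v : Fin (2*k),
        -((G.inDeg ostar v : ℝ) / (Fintype.card (Fin (2*k)) : ℝ)) *
          Real.logb 2 ((G.inDeg ostar v : ℝ) / (Fintype.card (Fin (2*k)) : ℝ))
        = (G.inDeg ostar v : ℝ) * ((2*(k:ℝ))⁻¹ * Real.logb 2 (k:ℝ)) := by
      intro v
      rw [hinstar v, hcardE]
      by_cases hv : v.val % 2 = 1
      · rw [if_pos hv]
        have h2 : ((2:ℕ):ℝ) / (2*(k:ℝ)) = ((k:ℝ))⁻¹ := by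
          push_cast; field_simp
        rw [h2, Real.logb_inv]
        push_cast; ring
      · rw [if_neg hv]; simp
    rw [Finset.sum_congr rfl (fun v _ => hterm v), ← Finset.sum_mul]
    have hsum : ∑ v : Fin (2*k), (G.inDeg ostar v : ℝ) = 2*(k:ℝ) := by
      rw [← Nat.cast_sum, Multigraph.sum_inDeg, Fintype.card_fin]
      push_cast; ring
    rw [hsum, ← mul_assoc, mul_inv_cancel₀ (ne_of_gt h2K0), one_mul]
  -- lower bound for every orientation
  have hlow : ∀ o : Fin (2*k) → Bool, Real.logb 2 (k:ℝ) ≤ G.entropy o := by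
    intro o
    have hle2 : ∀ v, G.inDeg o v ≤ 2 := by
      intro v
      rw [Multigraph.inDeg]
      calc (Finset.univ.filter (fun e => G.head o e = v)).card
          ≤ ({v, v-1} : Finset (Fin (2*k))).card := by
            apply Finset.card_le_card
            intro e he
            simp only [Finset.mem_filter, Finset.mem_univ, true_and] at he
            have hd : G.head o e = e ∨ G.head o e = e + 1 := by
              rw [Multigraph.head, hG']
              split
              · left; rfl
              · right; rfl
            simp only [Finset.mem_insert, Finset.mem_singleton]
            rcases hd with h | h
            · left; rw [← he, h]
            · right; exact eq_sub_iff_add_eq.mpr (by rw [← he, h])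
        _ ≤ 2 := (Finset.card_insert_le _ _).trans (by simp)
    have hterm : ∀ v : Fin (2*k),
        ((G.inDeg o v : ℝ)/(2*(k:ℝ))) * Real.logb 2 (k:ℝ) ≤
        -((G.inDeg o v : ℝ)/(2*(k:ℝ))) *
          Real.logb 2 ((G.inDeg o v : ℝ)/(2*(k:ℝ))) := by
      intro v
      rcases Nat.eq_zero_or_pos (G.inDeg o v) with hd | hd
      · rw [hd]; simp
      · have hd' : (0:ℝ) < (G.inDeg o v : ℝ) := by exact_mod_cast hd
        set p : ℝ := (G.inDeg o v : ℝ)/(2*(k:ℝ)) with hp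
        have hp0 : 0 < p := div_pos hd' h2K0
        have hpk : (k:ℝ) * p ≤ 1 := by
          rw [hp]
          have h2 : ((G.inDeg o v : ℕ):ℝ) ≤ 2 := by exact_mod_cast hle2 v
          rw [mul_div_assoc']
          rw [div_le_one h2K0]
          nlinarith
        have hlogm : Real.logb 2 (k:ℝ) + Real.logb 2 p ≤ 0 := by
          rw [← Real.logb_mul hKne (ne_of_gt hp0)]
          exact Real.logb_nonpos (by norm_num) (by positivity) hpk
        have hle : Real.logb 2 (k:ℝ) ≤ -Real.logb 2 p := by linarith
        calc p * Real.logb 2 (k:ℝ) ≤ p * (-Real.logb 2 p) :=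
              mul_le_mul_of_nonneg_left hle (le_of_lt hp0)
          _ = -p * Real.logb 2 p := by ring
    have hE : G.entropy o = ∑ v : Fin (2*k),
        -((G.inDeg o v : ℝ)/(2*(k:ℝ))) *
          Real.logb 2 ((G.inDeg o v : ℝ)/(2*(k:ℝ))) := by
      rw [Multigraph.entropy, hcardE]
    rw [hE]
    calc Real.logb 2 (k:ℝ)
        = ∑ v : Fin (2*k), ((G.inDeg o v : ℝ)/(2*(k:ℝ))) * Real.logb 2 (k:ℝ) := by
          rw [← Finset.sum_mul, ← Finset.sum_div, ← Nat.cast_sum,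
            Multigraph.sum_inDeg, Fintype.card_fin]
          push_cast
          rw [div_self (ne_of_gt h2K0), one_mul]
      _ ≤ _ := Finset.sum_le_sum (fun v _ => hterm v)
  have hOPT : G.OPT = Real.logb 2 (k:ℝ) := by
    apply le_antisymm
    · exact (ciInf_le (Set.finite_range _).bddBelow ostar).trans (le_of_eq hent_star)
    · exact le_ciInf hlow
  have hsplit : Real.logb 2 (2*(k:ℝ)) = Real.logb 2 (k:ℝ) + 1 := by
    rw [Real.logb_mul (by norm_num) hKne, Real.logb_self_eq_one (by norm_num)]
    ring
  exact ⟨hOPT, hbiased, hent_false, by rw [hsplit, hOPT]⟩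
end

section
/- Let G be a finite loopless multigraph with m edges. A sequence (ρ(v))_{v∈V} of non-negative integers is the in-degree sequence of some orientation of G if and only if Σ_{v∈V} ρ(v) = m and for every S ⊆ V, Σ_{v∈S} ρ(v) ≤ (number of edges with at least one endpoint in S). -/
open Finset Real

section Aux

variable {V E : Type} [Fintype V] [DecidableEq V] [Fintype E]

omit [Fintype V] [DecidableEq V] [Fintype E] in
lemma head_mem_ends' (G : Multigraph V E) (o : E → Bool) (e : E) :
    G.head o e = (G.ends e).1 ∨ G.head o e = (G.ends e).2 := by
  unfold Multigraph.head; split <;> simp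

lemma sum_inDeg_filter' (G : Multigraph V E) (o : E → Bool) (S : Finset V) :
    ∑ v ∈ S, G.inDeg o v =
      (Finset.univ.filter (fun e => G.head o e ∈ S)).card := by
  rw [Finset.card_eq_sum_card_fiberwise (f := G.head o) (s := Finset.univ.filter (fun e => G.head o e ∈ S)) (t := S)
    (fun e he => (Finset.mem_filter.mp he).2)]
  refine Finset.sum_congr rfl fun v hv => ?_
  unfold Multigraph.inDeg
  congr 1
  ext e
  simp only [Finset.mem_filter, Finset.mem_univ, true_and]
  exact ⟨fun h => ⟨by rw [h]; exact hv, h⟩, And.right⟩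

end Aux

/-- A sequence `ρ` is the in-degree sequence of some orientation of `G` iff
`∑ ρ = m` and for every `S ⊆ V`, `∑_{v∈S} ρ v` is at most the number of edges
with at least one endpoint in `S`. -/
theorem stmt_11 {V E : Type} [Fintype V] [DecidableEq V] [Fintype E]
    (G : Multigraph V E) (ρ : V → ℕ) :
    (∃ o : E → Bool, ∀ v, G.inDeg o v = ρ v) ↔
      (∑ v, ρ v = Fintype.card E ∧
       ∀ S : Finset V, ∑ v ∈ S, ρ v ≤ G.edgeCover S) := by
  constructor
  · rintro ⟨o, ho⟩
    have key : ∀ S : Finset V, ∑ v ∈ S, ρ v =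
        (Finset.univ.filter (fun e => G.head o e ∈ S)).card := by
      intro S
      rw [← sum_inDeg_filter' G o S]
      exact Finset.sum_congr rfl fun v _ => (ho v).symm
    constructor
    · rw [key Finset.univ, Finset.filter_true_of_mem fun e _ => Finset.mem_univ _,
        Finset.card_univ]
    · intro S
      rw [key S]
      apply Finset.card_le_card
      intro e he
      simp only [Finset.mem_filter, Finset.mem_univ, true_and] at he ⊢
      rcases head_mem_ends' G o e with h | h
      · exact Or.inl (h ▸ he)
      · exact Or.inr (h ▸ he)
  · rintro ⟨hsum, hS⟩
    classical
    set W := Σ v : V, Fin (ρ v) with hW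
    have fibcard : ∀ v : V, (Finset.univ.filter (fun w : W => w.1 = v)).card = ρ v := by
      intro v
      have hmap : (Finset.univ.filter (fun w : W => w.1 = v)) =
          (Finset.univ : Finset (Fin (ρ v))).map
            ⟨fun i => (⟨v, i⟩ : W), fun i j h => by simpa using h⟩ := by
        ext ⟨a, i⟩
        simp only [Finset.mem_filter, Finset.mem_univ, true_and, Finset.mem_map,
          Function.Embedding.coeFn_mk]
        constructor
        · rintro rfl; exact ⟨i, rfl⟩
        · rintro ⟨j, hj⟩; cases hj; rfl
      rw [hmap, Finset.card_map, Finset.card_univ, Fintype.card_fin]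
    let t : E → Finset W := fun e => Finset.univ.filter
      (fun w => w.1 = (G.ends e).1 ∨ w.1 = (G.ends e).2)
    have hall : ∀ s : Finset E, s.card ≤ (s.biUnion t).card := by
      intro s
      set U : Finset V := s.biUnion (fun e => {(G.ends e).1, (G.ends e).2}) with hU
      have hbU : s.biUnion t = Finset.univ.filter (fun w : W => w.1 ∈ U) := by
        ext w
        simp only [Finset.mem_biUnion, Finset.mem_filter, Finset.mem_univ, true_and, t, hU,
          Finset.mem_insert, Finset.mem_singleton]
      rw [hbU]
      have hcard : (Finset.univ.filter (fun w : W => w.1 ∈ U)).card = ∑ v ∈ U, ρ v := by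
        rw [Finset.card_eq_sum_card_fiberwise (f := Sigma.fst) (s := Finset.univ.filter (fun w : W => w.1 ∈ U)) (t := U)
          (fun w hw => (Finset.mem_filter.mp hw).2)]
        refine Finset.sum_congr rfl fun v hv => ?_
        rw [← fibcard v]
        congr 1
        ext w
        simp only [Finset.mem_filter, Finset.mem_univ, true_and]
        exact ⟨And.right, fun h => ⟨by rw [h]; exact hv, h⟩⟩
      rw [hcard]
      have h1 : s.card ≤
          (Finset.univ.filter (fun e => (G.ends e).1 ∈ U ∧ (G.ends e).2 ∈ U)).card := by
        apply Finset.card_le_card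
        intro e he
        simp only [Finset.mem_filter, Finset.mem_univ, true_and]
        exact ⟨Finset.mem_biUnion.mpr ⟨e, he, by simp⟩,
               Finset.mem_biUnion.mpr ⟨e, he, by simp⟩⟩
      have h2 := hS Uᶜ
      have hsplit : (Finset.univ.filter (fun e => (G.ends e).1 ∈ U ∧ (G.ends e).2 ∈ U)).card
          + G.edgeCover Uᶜ = Fintype.card E := by
        unfold Multigraph.edgeCover
        rw [← Finset.card_univ (α := E)]
        have heq : Finset.univ.filter (fun e => (G.ends e).1 ∈ Uᶜ ∨ (G.ends e).2 ∈ Uᶜ)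
            = Finset.univ.filter (fun e => ¬((G.ends e).1 ∈ U ∧ (G.ends e).2 ∈ U)) := by
          ext e
          simp only [Finset.mem_filter, Finset.mem_univ, true_and, Finset.mem_compl]
          tauto
        rw [heq, Finset.card_filter_add_card_filter_not]
      have hsum2 : ∑ v ∈ U, ρ v + ∑ v ∈ Uᶜ, ρ v = Fintype.card E := by
        rw [Finset.sum_add_sum_compl, hsum]
      omega
    obtain ⟨f, hfinj, hft⟩ := (Finset.all_card_le_biUnion_card_iff_exists_injective t).mp hall
    refine ⟨fun e => decide ((f e).1 = (G.ends e).1), ?_⟩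
    set o : E → Bool := fun e => decide ((f e).1 = (G.ends e).1) with hodef
    have hhead : ∀ e, G.head o e = (f e).1 := by
      intro e
      have hfe := hft e
      simp only [t, Finset.mem_filter, Finset.mem_univ, true_and] at hfe
      unfold Multigraph.head
      by_cases h : (f e).1 = (G.ends e).1
      · have hoe : o e = true := by simp [hodef, h]
        rw [hoe]; simpa using h.symm
      · have h2 : (f e).1 = (G.ends e).2 := hfe.resolve_left h
        have hoe : o e = false := by simp [hodef, h]
        rw [hoe]; simpa using h2.symm
    have hle : ∀ v, G.inDeg o v ≤ ρ v := by
      intro v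
      unfold Multigraph.inDeg
      rw [← fibcard v]
      apply Finset.card_le_card_of_injOn f
      · intro e he
        simp only [Finset.mem_coe, Finset.mem_filter, Finset.mem_univ, true_and] at he ⊢
        rw [← hhead e]; exact he
      · exact fun a _ b _ h => hfinj h
    have htot : ∑ v, G.inDeg o v = ∑ v, ρ v := by
      rw [hsum, sum_inDeg_filter' G o Finset.univ,
        Finset.filter_true_of_mem fun e _ => Finset.mem_univ _, Finset.card_univ]
    intro v
    exact (Finset.sum_eq_sum_iff_of_le (fun i _ => hle i)).mp htot v (Finset.mem_univ v)
end
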